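/- arXiv:2004.10559 — 2 statements merged into one kernel-verified Lean document; each statement's English description precedes it below -/
import Mathlib

section
/- For every real t, lim_{σ→(1/2)^+} E[exp(t·F̄(σ))] = exp(t²/2). -/
/-!
By independence, the partial sums `S_N = ∑_{n<N} a_n X_n`, `a_n = n^{-σ}/√V(σ)`, have moment
generating function `∏_{n<N} cosh (t a_n)`. As `E[exp (2t S_N)] ≤ exp (2t²)`, the family
`exp (t S_N)` is bounded in `L²`, hence uniformly integrable, so by Vitali's theorem the moment
generating function of `F(σ)/√V(σ)` is the infinite product `∏ cosh (t a_n)`. Since `∑ a_n² = 1`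
and `a_n² ≤ 1/V(σ)`, the bounds `exp (x²/2 - x⁴/4) ≤ cosh x ≤ exp (x²/2)` squeeze it between
`exp (t²/2 - t⁴/(4V(σ)))` and `exp (t²/2)`, and `V(σ) → ∞` as `σ → 1/2⁺` because at `σ = 1/2`
the series is the harmonic one.
-/

open MeasureTheory ProbabilityTheory Filter Topology

/-- `V σ = E[F(σ)²] = ∑_{n=1}^∞ n^{-2σ}`. -/
noncomputable def V (σ : ℝ) : ℝ := ∑' n : ℕ, (n : ℝ) ^ (-(2 * σ))

open scoped ENNReal

section

variable {α β E : Type*} [MeasurableSpace α] {μ : Measure α}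
  [NormedAddCommGroup β] [NormedAddCommGroup E] [NormedSpace ℝ E]

theorem unifIntegrable_of_eLpNorm_le {ι : Type*} {p q : ℝ≥0∞} (hpq : p < q) {f : ι → α → β}
    {C : ℝ≥0∞} (hC : C ≠ ∞) (hf : ∀ i, AEStronglyMeasurable (f i) μ)
    (hfC : ∀ i, eLpNorm (f i) q μ ≤ C) : UnifIntegrable f p μ := by
  obtain rfl | hp := eq_or_ne p 0
  · exact fun ε _ => ⟨1, one_pos, fun _ _ _ _ => by simp⟩
  set r := 1 / p.toReal - 1 / q.toReal
  have hr : 0 < r := by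
    have hp_top : p ≠ ∞ := hpq.ne_top
    have hp_pos : 0 < p.toReal := ENNReal.toReal_pos hp hp_top
    obtain rfl | hq_top := eq_or_ne q ∞
    · simpa [r] using hp_pos
    · have := (ENNReal.toReal_lt_toReal hp_top hq_top).2 hpq
      simp only [r, sub_pos]
      gcongr
  intro ε hε
  refine ⟨(ε / (C.toReal + 1)) ^ (1 / r), by positivity, fun i s hs hμs => ?_⟩
  calc eLpNorm (s.indicator (f i)) p μ = eLpNorm (f i) p (μ.restrict s) :=
        eLpNorm_indicator_eq_eLpNorm_restrict hs
    _ ≤ eLpNorm (f i) q (μ.restrict s) * μ.restrict s Set.univ ^ r :=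
        eLpNorm_le_eLpNorm_mul_rpow_measure_univ hpq.le (hf i).restrict
    _ ≤ C * ENNReal.ofReal ((ε / (C.toReal + 1)) ^ (1 / r)) ^ r := by
        rw [Measure.restrict_apply_univ]
        gcongr
        exact (eLpNorm_restrict_le _ _ _ _).trans (hfC i)
    _ ≤ ENNReal.ofReal ε := by
        rw [ENNReal.ofReal_rpow_of_nonneg (by positivity) hr.le, ← Real.rpow_mul (by positivity),
          one_div_mul_cancel hr.ne', Real.rpow_one, ← ENNReal.ofReal_toReal hC,
          ← ENNReal.ofReal_mul ENNReal.toReal_nonneg]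
        gcongr
        rw [ENNReal.toReal_ofReal ENNReal.toReal_nonneg, mul_div_assoc',
          div_le_iff₀ (by positivity)]
        nlinarith

theorem tendsto_integral_of_tendsto_ae_of_eLpNorm_le [IsFiniteMeasure μ] {q : ℝ≥0∞} (hq : 1 < q)
    {f : ℕ → α → E} {g : α → E} {C : ℝ≥0∞} (hC : C ≠ ∞) (hf : ∀ n, AEStronglyMeasurable (f n) μ)
    (hfC : ∀ n, eLpNorm (f n) q μ ≤ C) (hfg : ∀ᵐ x ∂μ, Tendsto (f · x) atTop (𝓝 (g x))) :
    Tendsto (fun n => ∫ x, f n x ∂μ) atTop (𝓝 (∫ x, g x ∂μ)) := by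
  have hg : MemLp g q μ :=
    ⟨aestronglyMeasurable_of_tendsto_ae atTop hf hfg,
      (Lp.eLpNorm_le_of_ae_tendsto (Eventually.of_forall hfC) hf hfg).trans_lt hC.lt_top⟩
  have hfq (n : ℕ) : MemLp (f n) q μ := ⟨hf n, (hfC n).trans_lt hC.lt_top⟩
  refine tendsto_integral_of_L1' g hg.1 (Eventually.of_forall fun n => ?_) ?_
  · exact memLp_one_iff_integrable.1 ((hfq n).mono_exponent hq.le)
  exact tendsto_Lp_finite_of_tendsto_ae le_rfl ENNReal.one_ne_top hf (hg.mono_exponent hq.le)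
    (unifIntegrable_of_eLpNorm_le hq hC hf hfC) hfg

lemma eLpNorm_two_exp_eq {u : α → ℝ} (hu : Measurable u)
    (hint : Integrable (fun ω => Real.exp (2 * u ω)) μ) :
    eLpNorm (fun ω => Real.exp (u ω)) 2 μ = ENNReal.ofReal √(∫ ω, Real.exp (2 * u ω) ∂μ) := by
  have hsq (ω : α) : Real.exp (u ω) ^ 2 = Real.exp (2 * u ω) := by
    rw [← Real.exp_nat_mul]; norm_num
  have hL2 : MemLp (fun ω => Real.exp (u ω)) 2 μ :=
    (memLp_two_iff_integrable_sq (by fun_prop)).2 (by simpa only [hsq] using hint)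
  rw [hL2.eLpNorm_eq_integral_rpow_norm two_ne_zero ENNReal.ofNat_ne_top, Real.sqrt_eq_rpow]
  simp [Real.abs_exp, hsq]

end

namespace Real

lemma one_add_sq_div_two_le_cosh (x : ℝ) : 1 + x ^ 2 / 2 ≤ cosh x := by
  have h : ∑ n ∈ Finset.range 2, x ^ (2 * n) / ((2 * n).factorial : ℝ) = 1 + x ^ 2 / 2 := by
    norm_num [Finset.sum_range_succ]
  rw [← h, cosh_eq_tsum]
  exact x.hasSum_cosh.summable.sum_le_tsum _ fun n _ => by rw [pow_mul]; positivity

lemma exp_sq_div_two_sub_le_cosh (x : ℝ) : exp (x ^ 2 / 2 - x ^ 4 / 4) ≤ cosh x := by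
  set u := x ^ 2 / 2
  have hu : 0 ≤ u := by positivity
  have hlog : u - u ^ 2 ≤ log (1 + u) := by
    refine le_trans ?_ (one_sub_inv_le_log_of_pos (by positivity))
    rw [show 1 - (1 + u)⁻¹ = u / (1 + u) by field_simp; ring, le_div_iff₀ (by positivity)]
    nlinarith [pow_nonneg hu 3]
  calc exp (x ^ 2 / 2 - x ^ 4 / 4) = exp (u - u ^ 2) := by simp only [u]; ring_nf
    _ ≤ 1 + u := by simpa [exp_log (by positivity : 0 < 1 + u)] using exp_le_exp.2 hlog
    _ ≤ cosh x := one_add_sq_div_two_le_cosh x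

lemma prod_cosh_le_exp_sum_sq {ι : Type*} (s : Finset ι) (x : ι → ℝ) :
    ∏ i ∈ s, cosh (x i) ≤ exp (∑ i ∈ s, x i ^ 2 / 2) := by
  rw [exp_sum]
  exact Finset.prod_le_prod (fun i _ => (cosh_pos _).le) fun i _ => cosh_le_exp_half_sq _

lemma exp_sum_sq_sub_le_prod_cosh {ι : Type*} (s : Finset ι) (x : ι → ℝ) :
    exp (∑ i ∈ s, (x i ^ 2 / 2 - x i ^ 4 / 4)) ≤ ∏ i ∈ s, cosh (x i) := by
  rw [exp_sum]
  exact Finset.prod_le_prod (fun i _ => (exp_pos _).le) fun i _ => exp_sq_div_two_sub_le_cosh _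

end Real

section Rademacher

variable {Ω : Type*} [MeasurableSpace Ω] {μ : Measure Ω}

structure IsRademacher (μ : Measure Ω) (Y : Ω → ℝ) : Prop where
  measurable : Measurable Y
  measure_eq_one : μ {ω | Y ω = 1} = 1 / 2
  measure_eq_neg_one : μ {ω | Y ω = -1} = 1 / 2

variable [IsProbabilityMeasure μ]

lemma IsRademacher.ae_eq_one_or_eq_neg_one {Y : Ω → ℝ} (hY : IsRademacher μ Y) :
    ∀ᵐ ω ∂μ, Y ω = 1 ∨ Y ω = -1 := by
  obtain ⟨hY, h1, h2⟩ := hY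
  have hdisj : Disjoint {ω | Y ω = 1} {ω | Y ω = -1} :=
    Set.disjoint_left.2 fun ω (h : Y ω = 1) (h' : Y ω = -1) => by norm_num [h] at h'
  have hunion : μ ({ω | Y ω = 1} ∪ {ω | Y ω = -1}) = 1 := by
    rw [measure_union hdisj (hY (measurableSet_singleton _)), h1, h2, ENNReal.add_halves]
  exact (prob_compl_eq_zero_iff ((hY (measurableSet_singleton _)).union
    (hY (measurableSet_singleton _)))).2 hunion

lemma IsRademacher.integral_exp_mul {Y : Ω → ℝ} (hY : IsRademacher μ Y) (c : ℝ) :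
    ∫ ω, Real.exp (c * Y ω) ∂μ = Real.cosh c := by
  set A := {ω | Y ω = 1}
  set B := {ω | Y ω = -1}
  have hA : MeasurableSet A := hY.measurable (measurableSet_singleton _)
  have hB : MeasurableSet B := hY.measurable (measurableSet_singleton _)
  have hsplit : (fun ω => Real.exp (c * Y ω)) =ᵐ[μ]
      fun ω => A.indicator (fun _ => Real.exp c) ω + B.indicator (fun _ => Real.exp (-c)) ω := by
    filter_upwards [hY.ae_eq_one_or_eq_neg_one] with ω hω
    rcases hω with h | h <;> norm_num [A, B, Set.indicator_apply, h]
  rw [integral_congr_ae hsplit, integral_add ((integrable_const _).indicator hA)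
    ((integrable_const _).indicator hB), integral_indicator_const _ hA,
    integral_indicator_const _ hB, measureReal_def, measureReal_def, hY.measure_eq_one,
    hY.measure_eq_neg_one, Real.cosh_eq]
  norm_num
  ring

lemma integral_exp_mul_sum_eq_prod_cosh {ι : Type*} {X : ι → Ω → ℝ}
    (hX : ∀ i, IsRademacher μ (X i)) (hindep : iIndepFun X μ) (a : ι → ℝ) (s : Finset ι) (c : ℝ) :
    ∫ ω, Real.exp (c * ∑ i ∈ s, X i ω * a i) ∂μ = ∏ i ∈ s, Real.cosh (c * a i) := by
  have h := (hindep.comp (fun i x => x * a i) fun i => measurable_id.mul_const _).mgf_sum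
    (fun i => (hX i).measurable.mul_const _) s (t := c)
  simp only [mgf, Finset.sum_apply, Function.comp_apply] at h
  rw [h]
  refine Finset.prod_congr rfl fun i _ => ?_
  rw [← (hX i).integral_exp_mul]
  simp only [mul_comm, mul_left_comm]

theorem tendsto_prod_cosh_integral_exp {X : ℕ → Ω → ℝ} (hX : ∀ n, IsRademacher μ (X n))
    (hindep : iIndepFun X μ) {a : ℕ → ℝ} (ha : Summable fun n => a n ^ 2)
    {G : Ω → ℝ}
    (hG : ∀ᵐ ω ∂μ, Tendsto (fun N => ∑ n ∈ Finset.range N, X n ω * a n) atTop (𝓝 (G ω)))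
    (t : ℝ) :
    Tendsto (fun N => ∏ n ∈ Finset.range N, Real.cosh (t * a n)) atTop
      (𝓝 (∫ ω, Real.exp (t * G ω) ∂μ)) := by
  set S : ℕ → Ω → ℝ := fun N ω => ∑ n ∈ Finset.range N, X n ω * a n
  have hS (N : ℕ) : Measurable (S N) :=
    Finset.measurable_sum _ fun n _ => (hX n).measurable.mul_const _
  have hmgf (c : ℝ) (N : ℕ) := integral_exp_mul_sum_eq_prod_cosh hX hindep a (Finset.range N) c
  have hbound (N : ℕ) : eLpNorm (fun ω => Real.exp (t * S N ω)) 2 μ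
      ≤ ENNReal.ofReal √(Real.exp (2 * t ^ 2 * ∑' n, a n ^ 2)) := by
    have hmgf2 : ∫ ω, Real.exp (2 * (t * S N ω)) ∂μ
        = ∏ n ∈ Finset.range N, Real.cosh (2 * t * a n) := by
      simp only [← mul_assoc]; exact hmgf _ N
    have hint : Integrable (fun ω => Real.exp (2 * (t * S N ω))) μ :=
      Integrable.of_integral_ne_zero (by
        rw [hmgf2]; exact (Finset.prod_pos fun n _ => Real.cosh_pos _).ne')
    rw [eLpNorm_two_exp_eq ((hS N).const_mul t) hint, hmgf2]
    gcongr
    refine (Real.prod_cosh_le_exp_sum_sq _ _).trans (Real.exp_le_exp.2 ?_)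
    calc ∑ n ∈ Finset.range N, (2 * t * a n) ^ 2 / 2
          = 2 * t ^ 2 * ∑ n ∈ Finset.range N, a n ^ 2 := by
          rw [Finset.mul_sum]; exact Finset.sum_congr rfl fun n _ => by ring
      _ ≤ 2 * t ^ 2 * ∑' n, a n ^ 2 := by
          gcongr; exact ha.sum_le_tsum _ fun n _ => sq_nonneg _
  simp only [← hmgf]
  refine tendsto_integral_of_tendsto_ae_of_eLpNorm_le ENNReal.one_lt_two ENNReal.ofReal_ne_top
    (fun N => ((hS N).const_mul t).exp.aestronglyMeasurable) hbound ?_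
  filter_upwards [hG] with ω hω
  exact (Real.continuous_exp.tendsto _).comp (hω.const_mul t)

theorem integral_exp_le_of_hasSum_sq {X : ℕ → Ω → ℝ} (hX : ∀ n, IsRademacher μ (X n))
    (hindep : iIndepFun X μ) {a : ℕ → ℝ} (ha : HasSum (fun n => a n ^ 2) 1) {G : Ω → ℝ}
    (hG : ∀ᵐ ω ∂μ, Tendsto (fun N => ∑ n ∈ Finset.range N, X n ω * a n) atTop (𝓝 (G ω)))
    (t : ℝ) :
    ∫ ω, Real.exp (t * G ω) ∂μ ≤ Real.exp (t ^ 2 / 2) := by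
  refine le_of_tendsto' (tendsto_prod_cosh_integral_exp hX hindep ha.summable hG t) fun N => ?_
  refine (Real.prod_cosh_le_exp_sum_sq _ _).trans (Real.exp_le_exp.2 ?_)
  calc ∑ n ∈ Finset.range N, (t * a n) ^ 2 / 2 = t ^ 2 / 2 * ∑ n ∈ Finset.range N, a n ^ 2 := by
        rw [Finset.mul_sum]; exact Finset.sum_congr rfl fun n _ => by ring
    _ ≤ t ^ 2 / 2 * 1 := by gcongr; exact sum_le_hasSum _ (fun n _ => sq_nonneg _) ha
    _ = t ^ 2 / 2 := mul_one _

theorem exp_sub_le_integral_exp_of_hasSum_sq {X : ℕ → Ω → ℝ} (hX : ∀ n, IsRademacher μ (X n))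
    (hindep : iIndepFun X μ) {a : ℕ → ℝ} (ha : HasSum (fun n => a n ^ 2) 1) {δ : ℝ}
    (hδ : ∀ n, a n ^ 2 ≤ δ) {G : Ω → ℝ}
    (hG : ∀ᵐ ω ∂μ, Tendsto (fun N => ∑ n ∈ Finset.range N, X n ω * a n) atTop (𝓝 (G ω)))
    (t : ℝ) :
    Real.exp (t ^ 2 / 2 - t ^ 4 * δ / 4) ≤ ∫ ω, Real.exp (t * G ω) ∂μ := by
  set s : ℕ → ℝ := fun N => ∑ n ∈ Finset.range N, a n ^ 2
  have hs_le (N : ℕ) : s N ≤ 1 := sum_le_hasSum _ (fun n _ => sq_nonneg _) ha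
  have hfourth (N : ℕ) : ∑ n ∈ Finset.range N, a n ^ 4 ≤ δ :=
    calc ∑ n ∈ Finset.range N, a n ^ 4 ≤ ∑ n ∈ Finset.range N, δ * a n ^ 2 :=
          Finset.sum_le_sum fun n _ => by nlinarith [hδ n, sq_nonneg (a n)]
      _ = δ * s N := (Finset.mul_sum _ _ _).symm
      _ ≤ δ := by nlinarith [hs_le N, (sq_nonneg (a 0)).trans (hδ 0)]
  have hlower : Tendsto (fun N => Real.exp (t ^ 2 / 2 * s N - t ^ 4 * δ / 4)) atTop
      (𝓝 (Real.exp (t ^ 2 / 2 - t ^ 4 * δ / 4))) := by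
    have := ((ha.tendsto_sum_nat.const_mul (t ^ 2 / 2)).sub_const (t ^ 4 * δ / 4)).rexp
    simpa only [mul_one] using this
  refine le_of_tendsto_of_tendsto' hlower
    (tendsto_prod_cosh_integral_exp hX hindep ha.summable hG t) fun N => ?_
  refine le_trans (Real.exp_le_exp.2 ?_) (Real.exp_sum_sq_sub_le_prod_cosh _ _)
  have hsplit : ∑ n ∈ Finset.range N, ((t * a n) ^ 2 / 2 - (t * a n) ^ 4 / 4)
      = t ^ 2 / 2 * s N - t ^ 4 / 4 * ∑ n ∈ Finset.range N, a n ^ 4 := by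
    simp only [s, Finset.mul_sum, ← Finset.sum_sub_distrib]
    exact Finset.sum_congr rfl fun n _ => by ring
  rw [hsplit]
  nlinarith [hfourth N, pow_two_nonneg (t ^ 2)]

end Rademacher

lemma hasSum_V {σ : ℝ} (hσ : 1 / 2 < σ) : HasSum (fun n : ℕ => (n : ℝ) ^ (-(2 * σ))) (V σ) :=
  (Real.summable_nat_rpow.2 (by linarith)).hasSum

lemma one_le_V {σ : ℝ} (hσ : 1 / 2 < σ) : 1 ≤ V σ := by
  simpa [V] using (hasSum_V hσ).summable.le_tsum 1 fun n _ => Real.rpow_nonneg n.cast_nonneg _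

lemma tendsto_V_nhdsGT_half : Tendsto V (𝓝[>] (1 / 2)) atTop := by
  have hharmonic : Tendsto (fun N => ∑ n ∈ Finset.range N, (n : ℝ) ^ (-(2 * (1 / 2 : ℝ))))
      atTop atTop :=
    (not_summable_iff_tendsto_nat_atTop_of_nonneg fun n => Real.rpow_nonneg n.cast_nonneg _).1
      (by rw [Real.summable_nat_rpow]; norm_num)
  refine tendsto_atTop.2 fun b => ?_
  obtain ⟨N, hN⟩ := (hharmonic.eventually_gt_atTop b).exists
  have hcont : ContinuousAt (fun σ : ℝ => ∑ n ∈ Finset.range N, (n : ℝ) ^ (-(2 * σ))) (1 / 2) :=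
    tendsto_finsetSum _ fun n _ =>
      (Real.continuousAt_const_rpow' (by norm_num)).comp (by fun_prop)
  filter_upwards [nhdsWithin_le_nhds (hcont.eventually (eventually_gt_nhds hN)),
    self_mem_nhdsWithin] with σ hbσ (hσ : 1 / 2 < σ)
  exact hbσ.le.trans (sum_le_hasSum _ (fun n _ => Real.rpow_nonneg n.cast_nonneg _) (hasSum_V hσ))

lemma sq_rpow_neg_div_sqrt_V (σ : ℝ) (n : ℕ) :
    ((n : ℝ) ^ (-σ) / √(V σ)) ^ 2 = (n : ℝ) ^ (-(2 * σ)) / V σ := by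
  have hV : 0 ≤ V σ := tsum_nonneg fun n => Real.rpow_nonneg n.cast_nonneg _
  rw [div_pow, Real.sq_sqrt hV, ← Real.rpow_natCast, ← Real.rpow_mul n.cast_nonneg]
  ring_nf

lemma hasSum_sq_rpow_neg_div_sqrt_V {σ : ℝ} (hσ : 1 / 2 < σ) :
    HasSum (fun n : ℕ => ((n : ℝ) ^ (-σ) / √(V σ)) ^ 2) 1 := by
  simp only [sq_rpow_neg_div_sqrt_V]
  simpa [div_self (zero_lt_one.trans_le (one_le_V hσ)).ne'] using (hasSum_V hσ).div_const (V σ)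

lemma sq_rpow_neg_div_sqrt_V_le {σ : ℝ} (hσ : 1 / 2 < σ) (n : ℕ) :
    ((n : ℝ) ^ (-σ) / √(V σ)) ^ 2 ≤ (V σ)⁻¹ := by
  rw [sq_rpow_neg_div_sqrt_V, div_eq_mul_inv]
  refine mul_le_of_le_one_left (inv_nonneg.2 (zero_le_one.trans (one_le_V hσ))) ?_
  rcases n.eq_zero_or_pos with rfl | hn
  · simp [Real.zero_rpow (by linarith : -(2 * σ) ≠ 0)]
  · exact Real.rpow_le_one_of_one_le_of_nonpos (by exact_mod_cast hn) (by linarith)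

/-- For every real `t`, `E[exp(t F̄(σ))] → exp(t²/2)` as `σ → (1/2)⁺`,
where `F̄(σ) = F(σ)/√V(σ)`. -/
theorem mgf_limit_normalized_dirichlet
    {Ω : Type*} [MeasurableSpace Ω] (μ : Measure Ω) [IsProbabilityMeasure μ]
    (X : ℕ → Ω → ℝ) (hmeas : ∀ n, Measurable (X n))
    (hindep : iIndepFun X μ)
    (h1 : ∀ n, μ {ω | X n ω = 1} = 1/2) (h2 : ∀ n, μ {ω | X n ω = -1} = 1/2)
    (F : ℝ → Ω → ℝ)
    (hF : ∀ σ : ℝ, 1/2 < σ → ∀ᵐ ω ∂μ,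
      Tendsto (fun N : ℕ => ∑ n ∈ Finset.range N, X n ω * (n : ℝ) ^ (-σ))
        atTop (𝓝 (F σ ω)))
    (t : ℝ) :
    Tendsto (fun σ : ℝ => ∫ ω, Real.exp (t * (F σ ω / Real.sqrt (V σ))) ∂μ)
      (𝓝[>] (1/2 : ℝ)) (𝓝 (Real.exp (t ^ 2 / 2))) := by
  have hX (n : ℕ) : IsRademacher μ (X n) := ⟨hmeas n, h1 n, h2 n⟩
  have hbounds (σ : ℝ) (hσ : 1 / 2 < σ) :
      Real.exp (t ^ 2 / 2 - t ^ 4 * (V σ)⁻¹ / 4) ≤ ∫ ω, Real.exp (t * (F σ ω / √(V σ))) ∂μ ∧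
        ∫ ω, Real.exp (t * (F σ ω / √(V σ))) ∂μ ≤ Real.exp (t ^ 2 / 2) := by
    have hG : ∀ᵐ ω ∂μ, Tendsto
        (fun N => ∑ n ∈ Finset.range N, X n ω * ((n : ℝ) ^ (-σ) / √(V σ))) atTop
        (𝓝 (F σ ω / √(V σ))) := by
      filter_upwards [hF σ hσ] with ω hω
      simpa only [mul_div_assoc', Finset.sum_div] using hω.div_const _
    exact ⟨exp_sub_le_integral_exp_of_hasSum_sq hX hindep (hasSum_sq_rpow_neg_div_sqrt_V hσ)
        (sq_rpow_neg_div_sqrt_V_le hσ) hG t,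
      integral_exp_le_of_hasSum_sq hX hindep (hasSum_sq_rpow_neg_div_sqrt_V hσ) hG t⟩
  have hlower : Tendsto (fun σ => Real.exp (t ^ 2 / 2 - t ^ 4 * (V σ)⁻¹ / 4)) (𝓝[>] (1 / 2))
      (𝓝 (Real.exp (t ^ 2 / 2))) := by
    simpa using (((tendsto_V_nhdsGT_half.inv_tendsto_atTop.const_mul (t ^ 4)).div_const 4
      ).const_sub (t ^ 2 / 2)).rexp
  refine tendsto_of_tendsto_of_tendsto_of_le_of_le' hlower tendsto_const_nhds ?_ ?_ <;>
    filter_upwards [self_mem_nhdsWithin] with σ hσ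
  exacts [(hbounds σ hσ).1, (hbounds σ hσ).2]
end

section
/- Let ε > 0 be sufficiently small, set δ = ε/2, and let σ_k = 1/2 + 1/(2·exp(k^{1−δ})) for k ≥ 1. Then almost surely limsup_{k→∞} F̄(σ_k)/√(2·log log V(σ_k)) ≤ √(1+ε). -/
open MeasureTheory ProbabilityTheory Filter Topology

/-! Each `F(σ)` is a Rademacher series, hence sub-Gaussian with variance proxy `V(σ)`, so
`P(F̄(σ) > √(1+ε) √(2 log log V(σ))) ≤ (log V(σ))^{-(1+ε)}`. Comparing `V(σ)` with
`∫₁^∞ x^{-2σ} dx` gives `V(σ) ≥ 1/(2σ-1)`, so `log V(σ_k) ≥ k^{1-ε/2}` and these probabilities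
are at most `k^{-(1-ε/2)(1+ε)} ≤ k^{-(1+ε/4)}` once `ε ≤ 1/2`; Borel–Cantelli concludes. -/

open Real
open scoped NNReal ENNReal

section

variable {Ω : Type*} [MeasurableSpace Ω] {μ : Measure Ω}

structure IsRademacher_s15 (μ : Measure Ω) (Y : Ω → ℝ) : Prop where
  measurable : Measurable Y
  measure_eq_one : μ {ω | Y ω = 1} = 1 / 2
  measure_eq_neg_one : μ {ω | Y ω = -1} = 1 / 2

namespace IsRademacher_s15

variable [IsProbabilityMeasure μ] {Y : Ω → ℝ}

lemma ae_eq_one_or_eq_neg_one_s15 (hY : IsRademacher_s15 μ Y) : ∀ᵐ ω ∂μ, Y ω = 1 ∨ Y ω = -1 := by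
  have hdisj : Disjoint {ω | Y ω = 1} {ω | Y ω = -1} :=
    Set.disjoint_left.2 fun ω (h₁ : Y ω = 1) (h₂ : Y ω = -1) => by linarith
  have hA : MeasurableSet {ω | Y ω = 1} := hY.measurable (measurableSet_singleton _)
  have hB : MeasurableSet {ω | Y ω = -1} := hY.measurable (measurableSet_singleton _)
  refine ((ae_mem_iff_measure_eq (hA.union hB).nullMeasurableSet).2 ?_).mono fun ω h => h
  rw [measure_univ, measure_union hdisj hB, hY.measure_eq_one, hY.measure_eq_neg_one,
    ENNReal.add_halves]

lemma integral_comp (hY : IsRademacher_s15 μ Y) (f : ℝ → ℝ) :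
    ∫ ω, f (Y ω) ∂μ = (f 1 + f (-1)) / 2 := by
  have hA : MeasurableSet {ω | Y ω = 1} := hY.measurable (measurableSet_singleton _)
  have hB : MeasurableSet {ω | Y ω = -1} := hY.measurable (measurableSet_singleton _)
  have hf : (fun ω => f (Y ω)) =ᵐ[μ] fun ω => {ω | Y ω = 1}.indicator (fun _ => f 1) ω +
      {ω | Y ω = -1}.indicator (fun _ => f (-1)) ω := by
    filter_upwards [hY.ae_eq_one_or_eq_neg_one_s15] with ω hω
    rcases hω with h | h <;> norm_num [Set.indicator, h]
  rw [integral_congr_ae hf, integral_add ((integrable_const _).indicator hA)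
    ((integrable_const _).indicator hB), integral_indicator_const _ hA,
    integral_indicator_const _ hB, measureReal_def, measureReal_def, hY.measure_eq_one,
    hY.measure_eq_neg_one]
  norm_num
  ring

lemma hasSubgaussianMGF (hY : IsRademacher_s15 μ Y) : HasSubgaussianMGF Y 1 μ where
  integrable_exp_mul _ := integrable_exp_mul_of_mem_Icc (a := -1) (b := 1)
    hY.measurable.aemeasurable
    (hY.ae_eq_one_or_eq_neg_one_s15.mono fun ω h => by rcases h with h | h <;> simp [h])
  mgf_le t := by
    rw [mgf, hY.integral_comp fun y => exp (t * y)]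
    simpa [cosh_eq] using cosh_le_exp_half_sq t

end IsRademacher_s15

lemma ProbabilityTheory.HasSubgaussianMGF.mono {X : Ω → ℝ} {c c' : ℝ≥0}
    (h : HasSubgaussianMGF X c μ) (hc : c ≤ c') : HasSubgaussianMGF X c' μ where
  integrable_exp_mul := h.integrable_exp_mul
  mgf_le t := (h.mgf_le t).trans (exp_le_exp.2 (by gcongr))

lemma measure_gt_le_of_tendsto_ae {S : ℕ → Ω → ℝ} {G : Ω → ℝ}
    (hS : ∀ᵐ ω ∂μ, Tendsto (S · ω) atTop (𝓝 (G ω))) (t : ℝ) {b : ℝ≥0∞}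
    (hb : ∀ N, μ {ω | t < S N ω} ≤ b) : μ {ω | t < G ω} ≤ b := by
  have hsub : {ω | t < G ω} ≤ᵐ[μ] (⋃ M, ⋂ N ≥ M, {ω | t < S N ω}) := by
    filter_upwards [hS] with ω hω hG
    exact Set.mem_iUnion.2 ((eventually_atTop.1 (hω.eventually (lt_mem_nhds hG))).imp
      fun M hM => Set.mem_iInter₂.2 hM)
  refine (measure_mono_ae hsub).trans ?_
  have hmono : Monotone fun M => ⋂ N ≥ M, {ω | t < S N ω} :=
    fun M M' hM => Set.biInter_mono (fun N hN => hM.trans hN) fun _ _ => le_rfl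
  rw [hmono.measure_iUnion]
  exact iSup_le fun M => (measure_mono (Set.biInter_subset_of_mem le_rfl)).trans (hb M)

section RademacherSeries

variable [IsProbabilityMeasure μ] {X : ℕ → Ω → ℝ} {a : ℕ → ℝ}

lemma hasSubgaussianMGF_sum_range_mul (hX : ∀ n, IsRademacher_s15 μ (X n))
    (hindep : iIndepFun X μ) (ha : Summable fun n => a n ^ 2) (N : ℕ) :
    HasSubgaussianMGF (fun ω => ∑ n ∈ Finset.range N, X n ω * a n)
      (∑' n, a n ^ 2).toNNReal μ := by
  have hsum := HasSubgaussianMGF.sum_of_iIndepFun (s := Finset.range N)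
    (hindep.comp (fun n x => a n * x) fun n => measurable_const_mul _)
    fun n _ => (hX n).hasSubgaussianMGF.const_mul (a n)
  refine (hsum.mono ?_).congr (ae_of_all _ fun ω => ?_)
  · rw [Real.le_toNNReal_iff_coe_le (tsum_nonneg fun n => sq_nonneg _), NNReal.coe_sum]
    exact le_of_eq_of_le (Finset.sum_congr rfl fun n _ => mul_one (a n ^ 2))
      (ha.sum_le_tsum _ fun n _ => sq_nonneg (a n))
  · simp [mul_comm]

lemma rademacher_series_measure_gt_le (hX : ∀ n, IsRademacher_s15 μ (X n))
    (hindep : iIndepFun X μ) (ha : Summable fun n => a n ^ 2) {G : Ω → ℝ}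
    (hG : ∀ᵐ ω ∂μ, Tendsto (fun N => ∑ n ∈ Finset.range N, X n ω * a n) atTop (𝓝 (G ω)))
    {t : ℝ} (ht : 0 ≤ t) :
    μ {ω | t < G ω} ≤ ENNReal.ofReal (exp (-t ^ 2 / (2 * ∑' n, a n ^ 2))) := by
  refine measure_gt_le_of_tendsto_ae hG t fun N => ?_
  calc μ {ω | t < ∑ n ∈ Finset.range N, X n ω * a n}
      ≤ μ {ω | t ≤ ∑ n ∈ Finset.range N, X n ω * a n} :=
        measure_mono (Set.ofPred_subset_ofPred.2 fun ω => le_of_lt)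
    _ = ENNReal.ofReal (μ.real {ω | t ≤ ∑ n ∈ Finset.range N, X n ω * a n}) :=
      (ofReal_measureReal).symm
    _ ≤ _ := ENNReal.ofReal_le_ofReal
      (((hasSubgaussianMGF_sum_range_mul hX hindep ha N).measure_ge_le ht).trans_eq
        (by rw [Real.coe_toNNReal _ (tsum_nonneg fun n => sq_nonneg _)]))

end RademacherSeries

lemma inv_two_mul_sub_one_le_V {σ : ℝ} (hσ : 1 / 2 < σ) : (2 * σ - 1)⁻¹ ≤ V σ := by
  set s := 2 * σ - 1
  have hs : 0 < s := by linarith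
  have hsumm : Summable fun n : ℕ => (n : ℝ) ^ (-(2 * σ)) :=
    Real.summable_nat_rpow.2 (by linarith)
  have hpartial (N : ℕ) : (1 - ((1 : ℝ) + N) ^ (-s)) / s ≤ V σ := by
    have hanti : AntitoneOn (fun x : ℝ => x ^ (-(2 * σ))) (Set.Icc 1 (1 + N)) :=
      fun x hx y _ hxy => rpow_le_rpow_of_nonpos (by linarith [hx.1]) hxy (by linarith)
    have h1N : (1 : ℝ) ≤ 1 + N := le_add_of_nonneg_right N.cast_nonneg
    calc (1 - ((1 : ℝ) + N) ^ (-s)) / s = ∫ x in (1 : ℝ)..1 + N, x ^ (-(2 * σ)) := by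
          rw [integral_rpow (Or.inr ⟨by linarith, fun h => by
            rw [Set.uIcc_of_le h1N] at h; linarith [h.1]⟩), show -(2 * σ) + 1 = -s by ring,
            one_rpow]
          field_simp
          ring
      _ ≤ ∑ i ∈ Finset.range N, ((1 : ℝ) + i) ^ (-(2 * σ)) := hanti.integral_le_sum
      _ ≤ ∑ n ∈ Finset.range (N + 1), (n : ℝ) ^ (-(2 * σ)) := by
          rw [Finset.sum_range_succ']
          push_cast
          simp_rw [add_comm (1 : ℝ)]
          exact le_add_of_nonneg_right (rpow_nonneg le_rfl _)
      _ ≤ V σ := hsumm.sum_le_tsum _ fun n _ => rpow_nonneg n.cast_nonneg _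
  have hlim : Tendsto (fun N : ℕ => (1 - ((1 : ℝ) + N) ^ (-s)) / s) atTop (𝓝 s⁻¹) := by
    have h := (tendsto_rpow_neg_atTop hs).comp
      (tendsto_atTop_add_const_left _ 1 tendsto_natCast_atTop_atTop)
    simpa using (h.const_sub 1).div_const s
  exact le_of_tendsto' hlim hpartial

lemma le_log_V_half_add (w : ℝ) : w ≤ log (V (1 / 2 + 1 / (2 * exp w))) := by
  have h := inv_two_mul_sub_one_le_V (σ := 1 / 2 + 1 / (2 * exp w)) (by simp; positivity)
  rw [show 2 * (1 / 2 + 1 / (2 * exp w)) - 1 = (exp w)⁻¹ by field_simp; ring, inv_inv] at h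
  exact (le_log_iff_exp_le ((exp_pos w).trans_le h)).2 h

lemma measure_normalized_gt_le [IsProbabilityMeasure μ] {X : ℕ → Ω → ℝ}
    (hX : ∀ n, IsRademacher_s15 μ (X n)) (hindep : iIndepFun X μ) {F : Ω → ℝ} {σ : ℝ}
    (hσ : 1 / 2 < σ)
    (hF : ∀ᵐ ω ∂μ, Tendsto (fun N : ℕ => ∑ n ∈ Finset.range N, X n ω * (n : ℝ) ^ (-σ))
      atTop (𝓝 (F ω)))
    (hV : 1 < log (V σ)) {c : ℝ} (hc : 0 ≤ c) :
    μ {ω | √c < F ω / √(V σ) / √(2 * log (log (V σ)))} ≤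
      ENNReal.ofReal (log (V σ) ^ (-c)) := by
  have hv : 0 < V σ := (inv_pos.2 (by linarith)).trans_le (inv_two_mul_sub_one_le_V hσ)
  have hL : 0 < log (log (V σ)) := log_pos hV
  have hsq (n : ℕ) : ((n : ℝ) ^ (-σ)) ^ 2 = (n : ℝ) ^ (-(2 * σ)) := by
    rw [← rpow_natCast, ← rpow_mul n.cast_nonneg]
    ring_nf
  have hset : {ω | √c < F ω / √(V σ) / √(2 * log (log (V σ)))} =
      {ω | √c * √(2 * log (log (V σ))) * √(V σ) < F ω} := by
    ext ω
    simp only [Set.mem_ofPred_eq]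
    rw [lt_div_iff₀ (by positivity), lt_div_iff₀ (by positivity)]
  rw [hset]
  refine (rademacher_series_measure_gt_le hX hindep (a := fun n => (n : ℝ) ^ (-σ))
    (by simpa [hsq] using Real.summable_nat_rpow.2 (by linarith : -(2 * σ) < -1)) hF
    (by positivity)).trans (le_of_eq ?_)
  simp only [hsq]
  rw [← V, rpow_def_of_pos (by linarith), mul_pow, mul_pow, sq_sqrt hc, sq_sqrt (by positivity),
    sq_sqrt hv.le]
  congr 2
  field_simp

lemma ae_eventually_notMem_of_eventually_le [IsFiniteMeasure μ] {s : ℕ → Set Ω} {b : ℕ → ℝ}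
    (hb : Summable b) (hb₀ : ∀ k, 0 ≤ b k)
    (hs : ∀ᶠ k in atTop, μ (s k) ≤ ENNReal.ofReal (b k)) :
    ∀ᵐ ω ∂μ, ∀ᶠ k in atTop, ω ∉ s k := by
  have hsumm : Summable fun k => μ.real (s k) :=
    hb.of_norm_bounded_eventually_nat (hs.mono fun k hk => by
      rw [Real.norm_of_nonneg measureReal_nonneg]
      exact ENNReal.toReal_le_of_le_ofReal (hb₀ k) hk)
  have htsum : ∑' k, μ (s k) = ENNReal.ofReal (∑' k, μ.real (s k)) := by
    rw [ENNReal.ofReal_tsum_of_nonneg (fun k => measureReal_nonneg) hsumm]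
    exact tsum_congr fun k => (ofReal_measureReal).symm
  exact ae_eventually_notMem (htsum ▸ ENNReal.ofReal_ne_top)

/-- The nonnegativity of `a` covers the junk value: a real `limsup` is the `sInf` of the eventual
upper bounds, which is `0` when that set is unbounded below. -/
lemma limsup_le_of_eventually_le_of_nonneg {u : ℕ → ℝ} {a : ℝ} (ha : 0 ≤ a)
    (h : ∀ᶠ k in atTop, u k ≤ a) : limsup u atTop ≤ a := by
  rw [limsup_eq]
  by_cases hb : BddBelow {c | ∀ᶠ k in atTop, u k ≤ c}
  · exact csInf_le hb h
  · rw [Real.sInf_of_not_bddBelow hb]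
    exact ha

end

/-- Step 2 (upper bound along a subsequence): for all sufficiently small `ε > 0`, with
`δ = ε/2` and `σ_k = 1/2 + 1/(2 exp(k^{1-δ}))`, almost surely
`limsup_k F̄(σ_k)/√(2 log log V(σ_k)) ≤ √(1+ε)`. -/
theorem upper_bound_along_subsequence
    {Ω : Type*} [MeasurableSpace Ω] (μ : Measure Ω) [IsProbabilityMeasure μ]
    (X : ℕ → Ω → ℝ) (hmeas : ∀ n, Measurable (X n))
    (hindep : iIndepFun X μ)
    (h1 : ∀ n, μ {ω | X n ω = 1} = 1/2) (h2 : ∀ n, μ {ω | X n ω = -1} = 1/2)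
    (F : ℝ → Ω → ℝ)
    (hF : ∀ σ : ℝ, 1/2 < σ → ∀ᵐ ω ∂μ,
      Tendsto (fun N : ℕ => ∑ n ∈ Finset.range N, X n ω * (n : ℝ) ^ (-σ))
        atTop (𝓝 (F σ ω))) :
    ∃ ε₀ > (0 : ℝ), ∀ ε : ℝ, 0 < ε → ε ≤ ε₀ →
      ∀ᵐ ω ∂μ,
        Filter.limsup
          (fun k : ℕ =>
            let σk : ℝ := 1/2 + 1 / (2 * Real.exp ((k : ℝ) ^ (1 - ε/2)))
            (F σk ω / Real.sqrt (V σk)) / Real.sqrt (2 * Real.log (Real.log (V σk))))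
          atTop ≤ Real.sqrt (1 + ε) := by
  have hX (n : ℕ) : IsRademacher_s15 μ (X n) := ⟨hmeas n, h1 n, h2 n⟩
  refine ⟨1 / 2, by norm_num, fun ε hε hε₀ => ?_⟩
  set w : ℕ → ℝ := fun k => (k : ℝ) ^ (1 - ε / 2)
  set σ : ℕ → ℝ := fun k => 1 / 2 + 1 / (2 * exp (w k))
  have htail : ∀ᶠ k : ℕ in atTop,
      μ {ω | √(1 + ε) < F (σ k) ω / √(V (σ k)) / √(2 * log (log (V (σ k))))} ≤
        ENNReal.ofReal ((k : ℝ) ^ (-(1 + ε / 4))) := by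
    filter_upwards [eventually_ge_atTop 2] with k hk
    have hk : (1 : ℝ) < k := by exact_mod_cast hk
    have hσ : 1 / 2 < σ k := lt_add_of_pos_right _ (by positivity)
    have hw : w k ≤ log (V (σ k)) := le_log_V_half_add (w k)
    refine (measure_normalized_gt_le hX hindep hσ (hF _ hσ)
      ((one_lt_rpow hk (by linarith)).trans_le hw) (by linarith)).trans
      (ENNReal.ofReal_le_ofReal ?_)
    calc log (V (σ k)) ^ (-(1 + ε)) ≤ w k ^ (-(1 + ε)) :=
          rpow_le_rpow_of_nonpos (by positivity) hw (by linarith)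
      _ = (k : ℝ) ^ ((1 - ε / 2) * -(1 + ε)) := (rpow_mul (by positivity) _ _).symm
      _ ≤ (k : ℝ) ^ (-(1 + ε / 4)) := rpow_le_rpow_of_exponent_le hk.le (by nlinarith)
  filter_upwards [ae_eventually_notMem_of_eventually_le
    (Real.summable_nat_rpow.2 (by linarith)) (fun k => by positivity) htail] with ω hω
  exact limsup_le_of_eventually_le_of_nonneg (sqrt_nonneg _) (hω.mono fun k hk => not_lt.1 hk)
end
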